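/- arXiv:2503.11359 — 2 statements merged into one kernel-verified Lean document; each statement's English description precedes it below -/
import Mathlib

section
/- Suppose that for every gear j ∈ {1,…,6} and every v ∈ Ω(j) there exist u₁ ∈ [T_min, T_max] and u₂ ∈ [F_b,min, F_b,max] with u₁·z(j)·z_f/r − C·v² − u₂ − G = 0. Let x = (p, v) ∈ ℝ² with Φ(v) ≠ ∅ and let j* ∈ Φ(v). Then the fixed-gear feasible set for the constant gear schedule j(i) = j* (i = 0,…,N−1) with initial state x is nonempty; in particular, it contains a trajectory with constant velocity, x(i) = (p + i·v·Δt, v) for i = 0,…,N, and constant inputs (u₁(i), u₂(i)) = (u₁, u₂) for i = 0,…,N−1, where u₁, u₂ satisfy the bounds and the force-balance equation above for the gear j*. -/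
/-- Vehicle parameters. -/
structure VehicleParams where
  m : ℝ        -- mass
  C : ℝ        -- wind drag coefficient
  G : ℝ        -- constant road friction force
  r : ℝ        -- wheel radius
  zf : ℝ       -- final drive ratio
  Δt : ℝ       -- time step
  z : ℤ → ℝ    -- gear ratios (used on gears 1,…,6)
  ωmin : ℝ     -- engine speed lower bound
  ωmax : ℝ     -- engine speed upper bound
  Tmin : ℝ     -- torque lower bound
  Tmax : ℝ     -- torque upper bound
  Fbmin : ℝ    -- brake force lower bound
  Fbmax : ℝ    -- brake force upper bound

/-- Engine speed ω(v, j) = 30·v·z(j)·z_f/(r·π). -/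
noncomputable def engSpeed (P : VehicleParams) (v : ℝ) (j : ℤ) : ℝ :=
  30 * v * P.z j * P.zf / (P.r * Real.pi)

/-- Feasible gear set Φ(v) = {j ∈ {1,…,6} : ω_min ≤ ω(v, j) ≤ ω_max}. -/
noncomputable def Phi (P : VehicleParams) (v : ℝ) : Set ℤ :=
  {j | 1 ≤ j ∧ j ≤ 6 ∧ P.ωmin ≤ engSpeed P v j ∧ engSpeed P v j ≤ P.ωmax}

/-- Ω(j) = {v ∈ ℝ : j ∈ Φ(v)}. -/
noncomputable def OmegaSet (P : VehicleParams) (j : ℤ) : Set ℝ := {v | j ∈ Phi P v}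

/-- Discrete-time dynamics
`f((p, v), (u₁, u₂, j)) = (p + v·Δt, v + (Δt/m)·(u₁·z(j)·z_f/r − C·v² − u₂ − G))`. -/
noncomputable def step (P : VehicleParams) (x : ℝ × ℝ) (u1 u2 : ℝ) (j : ℤ) : ℝ × ℝ :=
  (x.1 + x.2 * P.Δt,
   x.2 + (P.Δt / P.m) * (u1 * P.z j * P.zf / P.r - P.C * x.2 ^ 2 - u2 - P.G))

/-- Membership in the fixed-gear feasible set for gear schedule `jsch ∈ {1,…,6}^N`,
initial state `x0`, state sequence `x(0),…,x(N)` and inputs `(u1(i), u2(i))`, `i = 0,…,N−1`. -/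
noncomputable def Feasible (P : VehicleParams) (N : ℕ) (amax ΔTmax : ℝ) (jsch : ℕ → ℤ)
    (x0 : ℝ × ℝ) (x : ℕ → ℝ × ℝ) (u1 u2 : ℕ → ℝ) : Prop :=
  x 0 = x0 ∧
  (∀ i < N, 1 ≤ jsch i ∧ jsch i ≤ 6) ∧
  (∀ i < N, x (i + 1) = step P (x i) (u1 i) (u2 i) (jsch i)) ∧
  (∀ i < N, |(x (i + 1)).2 - (x i).2| ≤ amax * P.Δt) ∧
  (∀ i, i + 1 < N → |u1 (i + 1) - u1 i| ≤ ΔTmax * P.Δt) ∧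
  (∀ i, i + 1 < N → |jsch (i + 1) - jsch i| ≤ 1) ∧
  (∀ i < N,
    P.Tmin ≤ u1 i ∧ u1 i ≤ P.Tmax ∧
    P.Fbmin ≤ u2 i ∧ u2 i ≤ P.Fbmax ∧
    P.ωmin ≤ engSpeed P (x i).2 (jsch i) ∧ engSpeed P (x i).2 (jsch i) ≤ P.ωmax ∧
    P.ωmin ≤ engSpeed P (x (i + 1)).2 (jsch i) ∧ engSpeed P (x (i + 1)).2 (jsch i) ≤ P.ωmax)

/-! With inputs that balance the forces the acceleration vanishes, so the vehicle keeps the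
velocity `v` and the engine keeps the speed `ω(v, j*)`, which lies in bounds because `j* ∈ Φ(v)`;
the rate constraints hold because neither the velocity, the torque nor the gear ever changes. -/

theorem step_eq_of_force_balance (P : VehicleParams) (p : ℝ) {v u1 u2 : ℝ} {j : ℤ}
    (hbal : u1 * P.z j * P.zf / P.r - P.C * v ^ 2 - u2 - P.G = 0) :
    step P (p, v) u1 u2 j = (p + v * P.Δt, v) := by
  simp only [step, hbal, mul_zero, add_zero]

theorem feasible_const_of_force_balance (P : VehicleParams) (hΔt : 0 ≤ P.Δt) (N : ℕ)
    {amax ΔTmax : ℝ} (hamax : 0 ≤ amax) (hΔTmax : 0 ≤ ΔTmax) (p : ℝ) {v u1 u2 : ℝ} {j : ℤ}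
    (hj : j ∈ Phi P v) (hu1 : u1 ∈ Set.Icc P.Tmin P.Tmax) (hu2 : u2 ∈ Set.Icc P.Fbmin P.Fbmax)
    (hbal : u1 * P.z j * P.zf / P.r - P.C * v ^ 2 - u2 - P.G = 0) :
    Feasible P N amax ΔTmax (fun _ => j) (p, v)
      (fun i => (p + (i : ℝ) * v * P.Δt, v)) (fun _ => u1) (fun _ => u2) := by
  obtain ⟨hj1, hj6, hωlo, hωhi⟩ := hj
  have hstep (i : ℕ) : ((p + ((i + 1 : ℕ) : ℝ) * v * P.Δt, v) : ℝ × ℝ) =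
      step P (p + (i : ℝ) * v * P.Δt, v) u1 u2 j := by
    rw [step_eq_of_force_balance P _ hbal]
    push_cast
    ring_nf
  refine ⟨by simp, fun _ _ => ⟨hj1, hj6⟩, fun i _ => hstep i, fun _ _ => ?_, fun _ _ => ?_,
    fun _ _ => by simp, fun _ _ => ⟨hu1.1, hu1.2, hu2.1, hu2.2, hωlo, hωhi, hωlo, hωhi⟩⟩
  · simpa only [sub_self, abs_zero] using mul_nonneg hamax hΔt
  · simpa only [sub_self, abs_zero] using mul_nonneg hΔTmax hΔt

theorem constant_gear_schedule_feasible_general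
    (P : VehicleParams)
    (hΔt : 0 < P.Δt)
    (N : ℕ) (amax ΔTmax : ℝ) (hamax : 0 < amax) (hΔTmax : 0 ≤ ΔTmax)
    (hassum : ∀ j : ℤ, 1 ≤ j → j ≤ 6 → ∀ v : ℝ, v ∈ OmegaSet P j →
      ∃ u1 u2 : ℝ, P.Tmin ≤ u1 ∧ u1 ≤ P.Tmax ∧ P.Fbmin ≤ u2 ∧ u2 ≤ P.Fbmax ∧
        u1 * P.z j * P.zf / P.r - P.C * v ^ 2 - u2 - P.G = 0)
    (p v : ℝ) (jstar : ℤ) (hjstar : jstar ∈ Phi P v) :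
    ∃ u1 u2 : ℝ,
      (P.Tmin ≤ u1 ∧ u1 ≤ P.Tmax ∧ P.Fbmin ≤ u2 ∧ u2 ≤ P.Fbmax ∧
        u1 * P.z jstar * P.zf / P.r - P.C * v ^ 2 - u2 - P.G = 0) ∧
      Feasible P N amax ΔTmax (fun _ => jstar) (p, v)
        (fun i => (p + (i : ℝ) * v * P.Δt, v)) (fun _ => u1) (fun _ => u2) := by
  obtain ⟨u1, u2, hTlo, hThi, hFlo, hFhi, hbal⟩ :=
    hassum jstar hjstar.1 hjstar.2.1 v hjstar
  exact ⟨u1, u2, ⟨hTlo, hThi, hFlo, hFhi, hbal⟩,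
    feasible_const_of_force_balance P hΔt.le N hamax.le hΔTmax p hjstar ⟨hTlo, hThi⟩
      ⟨hFlo, hFhi⟩ hbal⟩

/-- If for every gear `j ∈ {1,…,6}` and every `v ∈ Ω(j)` there are in-bounds inputs
balancing the forces, then for any state `(p, v)` with `Φ(v) ≠ ∅` and any `j* ∈ Φ(v)`,
the fixed-gear feasible set for the constant gear schedule `j*` is nonempty: it contains
the constant-velocity trajectory `x(i) = (p + i·v·Δt, v)` with constant inputs. -/
theorem constant_gear_schedule_feasible
    (P : VehicleParams)
    (hm : 0 < P.m) (hC : 0 < P.C) (hr : 0 < P.r) (hzf : 0 < P.zf) (hΔt : 0 < P.Δt)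
    (hz6 : 0 < P.z 6) (hzmono : ∀ j : ℤ, 1 ≤ j → j ≤ 5 → P.z (j + 1) ≤ P.z j)
    (hωmin : 0 < P.ωmin) (hωle : P.ωmin ≤ P.ωmax)
    (hT : P.Tmin ≤ P.Tmax) (hFb : P.Fbmin ≤ P.Fbmax)
    (N : ℕ) (hN : 1 ≤ N) (amax ΔTmax : ℝ) (hamax : 0 < amax) (hΔTmax : 0 ≤ ΔTmax)
    (hassum : ∀ j : ℤ, 1 ≤ j → j ≤ 6 → ∀ v : ℝ, v ∈ OmegaSet P j →
      ∃ u1 u2 : ℝ, P.Tmin ≤ u1 ∧ u1 ≤ P.Tmax ∧ P.Fbmin ≤ u2 ∧ u2 ≤ P.Fbmax ∧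
        u1 * P.z j * P.zf / P.r - P.C * v ^ 2 - u2 - P.G = 0)
    (p v : ℝ) (hΦ : (Phi P v).Nonempty) (jstar : ℤ) (hjstar : jstar ∈ Phi P v) :
    ∃ u1 u2 : ℝ,
      (P.Tmin ≤ u1 ∧ u1 ≤ P.Tmax ∧ P.Fbmin ≤ u2 ∧ u2 ≤ P.Fbmax ∧
        u1 * P.z jstar * P.zf / P.r - P.C * v ^ 2 - u2 - P.G = 0) ∧
      Feasible P N amax ΔTmax (fun _ => jstar) (p, v)
        (fun i => (p + (i : ℝ) * v * P.Δt, v)) (fun _ => u1) (fun _ => u2) :=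
  constant_gear_schedule_feasible_general P hΔt N amax ΔTmax hamax hΔTmax hassum p v jstar hjstar
end

section
/- Suppose that for every gear j ∈ {1,…,6} and every v ∈ Ω(j) there exist u₁ ∈ [T_min, T_max] and u₂ ∈ [F_b,min, F_b,max] with u₁·z(j)·z_f/r − C·v² − u₂ − G = 0. Let 𝐣 = (j(0),…,j(N−1)) be any gear schedule and let (x(0),…,x(N)), (u₁(i), u₂(i))_{i=0,…,N−1} belong to the fixed-gear feasible set for 𝐣 with initial state x(0) = x. Then the successor state x⁺ = f(x, (u₁(0), u₂(0), j(0))) satisfies Φ(x⁺₂) ≠ ∅, and for every j⁺ ∈ Φ(x⁺₂) the fixed-gear feasible set with initial state x⁺ and constant gear schedule (j⁺,…,j⁺) of length N is nonempty (recursive feasibility under the nominal dynamics). -/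
/-!
At a speed where gear `j` is admissible, the force-balance hypothesis provides inputs under which
the net force vanishes. Holding gear `j` and these inputs keeps the velocity constant, so every
constraint along the horizon reduces to the constraints at the initial speed. The successor
velocity admits the old plan's first gear `j(0)`, so `Φ(x⁺₂)` is nonempty.
-/

theorem Feasible.mem_Phi_step {P : VehicleParams} {N : ℕ} {amax ΔTmax : ℝ} {jsch : ℕ → ℤ}
    {x0 : ℝ × ℝ} {x : ℕ → ℝ × ℝ} {u1 u2 : ℕ → ℝ}
    (hfeas : Feasible P N amax ΔTmax jsch x0 x u1 u2) (hN : 0 < N) :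
    jsch 0 ∈ Phi P (step P x0 (u1 0) (u2 0) (jsch 0)).2 := by
  obtain ⟨hx0, hgear, hdyn, -, -, -, hbox⟩ := hfeas
  obtain ⟨-, -, -, -, -, -, hω₁, hω₂⟩ := hbox 0 hN
  rw [hdyn 0 hN, hx0] at hω₁ hω₂
  exact ⟨(hgear 0 hN).1, (hgear 0 hN).2, hω₁, hω₂⟩

theorem step_of_force_balance {P : VehicleParams} {x : ℝ × ℝ} {u1 u2 : ℝ} {j : ℤ}
    (hbal : u1 * P.z j * P.zf / P.r - P.C * x.2 ^ 2 - u2 - P.G = 0) :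
    step P x u1 u2 j = (x.1 + x.2 * P.Δt, x.2) := by
  simp only [step, hbal, mul_zero, add_zero]

def cruise (P : VehicleParams) (x0 : ℝ × ℝ) (n : ℕ) : ℝ × ℝ :=
  (x0.1 + n * x0.2 * P.Δt, x0.2)

theorem step_cruise {P : VehicleParams} {x0 : ℝ × ℝ} {u1 u2 : ℝ} {j : ℤ}
    (hbal : u1 * P.z j * P.zf / P.r - P.C * x0.2 ^ 2 - u2 - P.G = 0) (n : ℕ) :
    step P (cruise P x0 n) u1 u2 j = cruise P x0 (n + 1) := by
  rw [step_of_force_balance (x := cruise P x0 n) hbal, cruise, cruise]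
  push_cast
  ring_nf

theorem feasible_cruise {P : VehicleParams} {N : ℕ} {amax ΔTmax : ℝ} {x0 : ℝ × ℝ}
    {u1 u2 : ℝ} {j : ℤ} (hj : j ∈ Phi P x0.2)
    (hu1 : P.Tmin ≤ u1 ∧ u1 ≤ P.Tmax) (hu2 : P.Fbmin ≤ u2 ∧ u2 ≤ P.Fbmax)
    (hbal : u1 * P.z j * P.zf / P.r - P.C * x0.2 ^ 2 - u2 - P.G = 0)
    (hamax : 0 ≤ amax * P.Δt) (hΔTmax : 0 ≤ ΔTmax * P.Δt) :
    Feasible P N amax ΔTmax (fun _ => j) x0 (cruise P x0) (fun _ => u1) (fun _ => u2) := by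
  obtain ⟨hj₁, hj₆, hω₁, hω₂⟩ := hj
  refine ⟨by simp [cruise], fun _ _ => ⟨hj₁, hj₆⟩, fun i _ => (step_cruise hbal i).symm,
    fun _ _ => by simpa [cruise] using hamax, fun _ _ => by simpa using hΔTmax,
    fun _ _ => by simp, fun _ _ => ⟨hu1.1, hu1.2, hu2.1, hu2.2, hω₁, hω₂, hω₁, hω₂⟩⟩

theorem recursive_feasibility_general
    (P : VehicleParams)
    (hΔt : 0 < P.Δt)
    (N : ℕ) (hN : 1 ≤ N) (amax ΔTmax : ℝ) (hamax : 0 < amax) (hΔTmax : 0 ≤ ΔTmax)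
    (hassum : ∀ j : ℤ, 1 ≤ j → j ≤ 6 → ∀ v : ℝ, v ∈ OmegaSet P j →
      ∃ u1 u2 : ℝ, P.Tmin ≤ u1 ∧ u1 ≤ P.Tmax ∧ P.Fbmin ≤ u2 ∧ u2 ≤ P.Fbmax ∧
        u1 * P.z j * P.zf / P.r - P.C * v ^ 2 - u2 - P.G = 0)
    (jsch : ℕ → ℤ) (x0 : ℝ × ℝ) (x : ℕ → ℝ × ℝ) (u1 u2 : ℕ → ℝ)
    (hfeas : Feasible P N amax ΔTmax jsch x0 x u1 u2) :
    (Phi P (step P x0 (u1 0) (u2 0) (jsch 0)).2).Nonempty ∧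
    ∀ jplus ∈ Phi P (step P x0 (u1 0) (u2 0) (jsch 0)).2,
      ∃ (x' : ℕ → ℝ × ℝ) (u1' u2' : ℕ → ℝ),
        Feasible P N amax ΔTmax (fun _ => jplus)
          (step P x0 (u1 0) (u2 0) (jsch 0)) x' u1' u2' := by
  refine ⟨⟨jsch 0, hfeas.mem_Phi_step hN⟩, fun jplus hjplus => ?_⟩
  obtain ⟨a, b, ha₁, ha₂, hb₁, hb₂, hbal⟩ := hassum jplus hjplus.1 hjplus.2.1 _ hjplus
  exact ⟨cruise P _, fun _ => a, fun _ => b, feasible_cruise hjplus ⟨ha₁, ha₂⟩ ⟨hb₁, hb₂⟩ hbal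
    (mul_nonneg hamax.le hΔt.le) (mul_nonneg hΔTmax hΔt.le)⟩

/-- Recursive feasibility under the nominal dynamics: if the force-balance assumption holds
and `(x(·), u(·))` is feasible for some gear schedule `𝐣` from state `x`, then the successor
state `x⁺ = f(x, (u₁(0), u₂(0), j(0)))` satisfies `Φ(x⁺₂) ≠ ∅`, and for each `j⁺ ∈ Φ(x⁺₂)`
the fixed-gear feasible set from `x⁺` with constant gear schedule `(j⁺,…,j⁺)` is nonempty. -/
theorem recursive_feasibility
    (P : VehicleParams)
    (hm : 0 < P.m) (hC : 0 < P.C) (hr : 0 < P.r) (hzf : 0 < P.zf) (hΔt : 0 < P.Δt)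
    (hz6 : 0 < P.z 6) (hzmono : ∀ j : ℤ, 1 ≤ j → j ≤ 5 → P.z (j + 1) ≤ P.z j)
    (hωmin : 0 < P.ωmin) (hωle : P.ωmin ≤ P.ωmax)
    (hT : P.Tmin ≤ P.Tmax) (hFb : P.Fbmin ≤ P.Fbmax)
    (N : ℕ) (hN : 1 ≤ N) (amax ΔTmax : ℝ) (hamax : 0 < amax) (hΔTmax : 0 ≤ ΔTmax)
    (hassum : ∀ j : ℤ, 1 ≤ j → j ≤ 6 → ∀ v : ℝ, v ∈ OmegaSet P j →
      ∃ u1 u2 : ℝ, P.Tmin ≤ u1 ∧ u1 ≤ P.Tmax ∧ P.Fbmin ≤ u2 ∧ u2 ≤ P.Fbmax ∧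
        u1 * P.z j * P.zf / P.r - P.C * v ^ 2 - u2 - P.G = 0)
    (jsch : ℕ → ℤ) (x0 : ℝ × ℝ) (x : ℕ → ℝ × ℝ) (u1 u2 : ℕ → ℝ)
    (hfeas : Feasible P N amax ΔTmax jsch x0 x u1 u2) :
    (Phi P (step P x0 (u1 0) (u2 0) (jsch 0)).2).Nonempty ∧
    ∀ jplus ∈ Phi P (step P x0 (u1 0) (u2 0) (jsch 0)).2,
      ∃ (x' : ℕ → ℝ × ℝ) (u1' u2' : ℕ → ℝ),
        Feasible P N amax ΔTmax (fun _ => jplus)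
          (step P x0 (u1 0) (u2 0) (jsch 0)) x' u1' u2' :=
  recursive_feasibility_general P hΔt N hN amax ΔTmax hamax hΔTmax hassum jsch x0 x u1 u2 hfeas
end
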